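/- arXiv:2401.16833 — 5 statements merged into one kernel-verified Lean document; each statement's English description precedes it below -/
import Mathlib

section
/- If A is stochastically degraded from B, i.e., A(x;y₀) = Σ_{y₁} B(x;y₁) Q(y₀|y₁) for some channel Q, then Z(A) ≥ Z(B). -/
open scoped BigOperators

noncomputable section

/-- `A` is a joint distribution on `Bool × Y`. -/
def IsJoint {Y : Type} [Fintype Y] (A : Bool → Y → ℝ) : Prop :=
  (∀ x y, 0 ≤ A x y) ∧ ∑ x : Bool, ∑ y, A x y = 1

/-- `Q` is a channel: nonnegative with rows summing to one. -/
def IsChannel {W Z : Type} [Fintype Z] (Q : W → Z → ℝ) : Prop :=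
  (∀ w z, 0 ≤ Q w z) ∧ ∀ w, ∑ z, Q w z = 1

/-- `A` is stochastically degraded from `B`. -/
def Degraded {Z W : Type} [Fintype Z] [Fintype W]
    (A : Bool → Z → ℝ) (B : Bool → W → ℝ) : Prop :=
  ∃ Q : W → Z → ℝ, IsChannel Q ∧ ∀ x z, A x z = ∑ w, B x w * Q w z

/-- `A'` is an input permutation of `A`. -/
def InputPerm {Y : Type} (A' A : Bool → Y → ℝ) : Prop :=
  ∃ f : Y → Bool, ∀ x y, A' x y = A (xor x (f y)) y

/-- Bhattacharyya parameter. -/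
def Zparam {Y : Type} [Fintype Y] (A : Bool → Y → ℝ) : ℝ :=
  2 * ∑ y, Real.sqrt (A false y * A true y)

/-- Total variation parameter. -/
def Kparam {Y : Type} [Fintype Y] (A : Bool → Y → ℝ) : ℝ :=
  (1 / 2) * ∑ y, |A false y - A true y|

/-- Conditional entropy H(X|Y) (base 2); terms with `A x y = 0` contribute `0`. -/
def Hparam {Y : Type} [Fintype Y] (A : Bool → Y → ℝ) : ℝ :=
  -∑ x : Bool, ∑ y, A x y * Real.logb 2 (A x y / (A false y + A true y))

/-- The minus polar operation. -/
def minusOp {Y₀ Y₁ : Type} (A : Bool → Y₀ → ℝ) (B : Bool → Y₁ → ℝ) :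
    Bool → Y₀ × Y₁ → ℝ :=
  fun u₀ y => ∑ x₁ : Bool, A (xor u₀ x₁) y.1 * B x₁ y.2

/-- The plus polar operation. -/
def plusOp {Y₀ Y₁ : Type} (A : Bool → Y₀ → ℝ) (B : Bool → Y₁ → ℝ) :
    Bool → Bool × Y₀ × Y₁ → ℝ :=
  fun u₁ z => A (xor z.1 u₁) z.2.1 * B u₁ z.2.2

theorem stmt3 {Y₀ Y₁ : Type} [Fintype Y₀] [Fintype Y₁]
    (A : Bool → Y₀ → ℝ) (B : Bool → Y₁ → ℝ)
    (hA : IsJoint A) (hB : IsJoint B)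
    (hdeg : Degraded A B) :
    Zparam A ≥ Zparam B := by
  obtain ⟨Q, ⟨hQ0, hQ1⟩, hAB⟩ := hdeg
  unfold Zparam
  have key : ∀ z : Y₀, ∑ w, Real.sqrt (B false w * B true w) * Q w z
      ≤ Real.sqrt (A false z * A true z) := by
    intro z
    have h := Real.sum_sqrt_mul_sqrt_le (Finset.univ : Finset Y₁)
      (f := fun w => B false w * Q w z) (g := fun w => B true w * Q w z)
      (fun w => mul_nonneg (hB.1 false w) (hQ0 w z))
      (fun w => mul_nonneg (hB.1 true w) (hQ0 w z))
    rw [← Real.sqrt_mul (Finset.sum_nonneg fun w _ => mul_nonneg (hB.1 false w) (hQ0 w z))]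
      at h
    rw [hAB false z, hAB true z]
    refine le_trans (le_of_eq ?_) h
    apply Finset.sum_congr rfl
    intro w _
    rw [Real.sqrt_mul (hB.1 false w), Real.sqrt_mul (hB.1 true w),
        Real.sqrt_mul (hB.1 false w)]
    have h3 : Real.sqrt (Q w z) * Real.sqrt (Q w z) = Q w z :=
      Real.mul_self_sqrt (hQ0 w z)
    ring_nf
    rw [Real.sq_sqrt (hQ0 w z)]
  have h2 : ∑ w, Real.sqrt (B false w * B true w)
      ≤ ∑ z, Real.sqrt (A false z * A true z) := by
    calc ∑ w, Real.sqrt (B false w * B true w)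
        = ∑ w, Real.sqrt (B false w * B true w) * (∑ z, Q w z) := by
          simp [hQ1]
      _ = ∑ z, ∑ w, Real.sqrt (B false w * B true w) * Q w z := by
          rw [Finset.sum_comm]
          simp [Finset.mul_sum]
      _ ≤ ∑ z, Real.sqrt (A false z * A true z) :=
          Finset.sum_le_sum fun z _ => key z
  linarith

end
end

section
/- Stochastic degradation is preserved by the minus polar operation in the first argument: if A' ⊑_d A, then A' ⊞ B ⊑_d A ⊞ B, where (A ⊞ B)(u₀; y₀,y₁) = Σ_{x₁∈{0,1}} A(u₀ ⊕ x₁; y₀) B(x₁; y₁). -/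
open scoped BigOperators

noncomputable section

theorem stmt7 {Y₀ Y₀' Y₁ : Type} [Fintype Y₀] [Fintype Y₀'] [Fintype Y₁]
    (A : Bool → Y₀ → ℝ) (A' : Bool → Y₀' → ℝ) (B : Bool → Y₁ → ℝ)
    (hA : IsJoint A) (hA' : IsJoint A') (hB : IsJoint B)
    (hdeg : Degraded A' A) :
    Degraded (minusOp A' B) (minusOp A B) := by
  classical
  obtain ⟨Q, ⟨hQ0, hQ1⟩, hQ⟩ := hdeg
  refine ⟨fun w z => Q w.1 z.1 * (if z.2 = w.2 then 1 else 0), ⟨?_, ?_⟩, ?_⟩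
  · intro w z
    have := hQ0 w.1 z.1
    positivity
  · intro w
    rw [Fintype.sum_prod_type]
    simp [hQ1]
  · intro x z
    simp only [minusOp, hQ]
    rw [Fintype.sum_prod_type]
    simp only [mul_ite, mul_one, mul_zero, Finset.sum_ite_eq, Finset.mem_univ, if_true]
    simp only [Finset.sum_mul]
    rw [Finset.sum_comm]
    exact Finset.sum_congr rfl fun x₁ _ =>
      Finset.sum_congr rfl fun w₀ _ => by ring

end
end

section
/- Stochastic degradation is preserved by the plus polar operation in the first argument: if A' ⊑_d A, then A' ⊛ B ⊑_d A ⊛ B, where (A ⊛ B)(u₁; u₀,y₀,y₁) = A(u₀ ⊕ u₁; y₀) B(u₁; y₁). -/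
open scoped BigOperators

noncomputable section

theorem stmt8 {Y₀ Y₀' Y₁ : Type} [Fintype Y₀] [Fintype Y₀'] [Fintype Y₁]
    (A : Bool → Y₀ → ℝ) (A' : Bool → Y₀' → ℝ) (B : Bool → Y₁ → ℝ)
    (hA : IsJoint A) (hA' : IsJoint A') (hB : IsJoint B)
    (hdeg : Degraded A' A) :
    Degraded (plusOp A' B) (plusOp A B) := by
  classical
  obtain ⟨Q, ⟨hQ0, hQ1⟩, hQeq⟩ := hdeg
  refine ⟨fun w z => Q w.2.1 z.2.1 * (if z.1 = w.1 ∧ z.2.2 = w.2.2 then 1 else 0),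
    ⟨fun w z => mul_nonneg (hQ0 _ _) (by split <;> norm_num), fun w => ?_⟩,
    fun x z => ?_⟩
  · simp only [Fintype.sum_prod_type, mul_ite, mul_one, mul_zero]
    rw [Finset.sum_eq_single w.1 (by intro b _ hb; simp [hb]) (by simp)]
    simp only [true_and]
    rw [Finset.sum_comm]
    rw [Finset.sum_eq_single w.2.2 (by intro c _ hc; simp [hc]) (by simp)]
    simp [hQ1]
  · have key : ∀ b y₀, (∑ y₁, plusOp A B x (b, y₀, y₁) *
        (Q y₀ z.2.1 * if z.1 = b ∧ z.2.2 = y₁ then 1 else 0)) =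
        if z.1 = b then A (xor b x) y₀ * Q y₀ z.2.1 * B x z.2.2 else 0 := by
      intro b y₀
      by_cases h : z.1 = b
      · subst h
        rw [Finset.sum_eq_single z.2.2]
        · simp [plusOp]; ring
        · intro c _ hc; simp [Ne.symm hc]
        · simp
      · simp [h]
    rw [Fintype.sum_prod_type]
    simp only [Fintype.sum_prod_type, key]
    rw [Finset.sum_eq_single z.1 (by intro b _ hb; simp [Ne.symm hb]) (by simp)]
    simp only [if_pos rfl, plusOp, hQeq, Finset.sum_mul]
    refine Finset.sum_congr rfl fun y₀ _ => by simp only [if_true]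

end
end

section
/- If A' is an input permutation of A, then A' ⊛ B is stochastically degraded from A ⊛ B. -/
open scoped BigOperators

noncomputable section

theorem stmt11 {Y₀ Y₁ : Type} [Fintype Y₀] [Fintype Y₁]
    (A A' : Bool → Y₀ → ℝ) (B : Bool → Y₁ → ℝ)
    (hA : IsJoint A) (hB : IsJoint B) (f : Y₀ → Bool)
    (hperm : ∀ x y₀, A' x y₀ = A (xor x (f y₀)) y₀) :
    Degraded (plusOp A' B) (plusOp A B) := by
  classical
  set g : Bool × Y₀ × Y₁ → Bool × Y₀ × Y₁ :=
    fun w => (xor w.1 (f w.2.1), w.2.1, w.2.2) with hg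
  refine ⟨fun w z => if g w = z then 1 else 0, ⟨?_, ?_⟩, ?_⟩
  · intro w z; positivity
  · intro w; simp
  · intro x z
    rw [Finset.sum_eq_single (g z)]
    · have hgg : g (g z) = z := by
        simp [hg, Bool.xor_assoc]
      simp only [hgg, if_pos, mul_one]
      obtain ⟨a, y0, y1⟩ := z
      simp only [plusOp, hperm, hg]
      cases a <;> cases x <;> cases f y0 <;> rfl
    · intro w _ hw
      have : g w ≠ z := by
        intro h
        apply hw
        have : g (g w) = g z := by rw [h]
        simpa [hg, Bool.xor_assoc] using this
      simp [this]
    · simp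
end
end

section
/- If B' is an input permutation of B, then A ⊛ B' ⊑ A ⊛ B, where ⊑ is the finite-chain closure of degradation and input permutation. Concretely, A ⊛ B' is stochastically degraded from the input permutation C of A ⊛ B defined by C(u₁;u₀,y₀,y₁) = (A⊛B)(u₁ ⊕ f(y₁); u₀,y₀,y₁). -/
open scoped BigOperators

noncomputable section

theorem stmt12 {Y₀ Y₁ : Type} [Fintype Y₀] [Fintype Y₁]
    (A : Bool → Y₀ → ℝ) (B B' : Bool → Y₁ → ℝ)
    (hA : IsJoint A) (hB : IsJoint B) (f : Y₁ → Bool)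
    (hperm : ∀ x y₁, B' x y₁ = B (xor x (f y₁)) y₁) :
    -- `A ⊛ B'` is degraded from the input permutation `C` of `A ⊛ B` given by
    -- `C(u₁; u₀, y₀, y₁) = (A ⊛ B)(u₁ ⊕ f(y₁); u₀, y₀, y₁)`;
    -- in particular `A ⊛ B' ⊑ A ⊛ B` via one permutation and one degradation step.
    Degraded (plusOp A B') (fun u₁ z => plusOp A B (xor u₁ (f z.2.2)) z) ∧
      InputPerm (fun u₁ (z : Bool × Y₀ × Y₁) => plusOp A B (xor u₁ (f z.2.2)) z)
        (plusOp A B) := by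
  classical
  have hg : ∀ w z : Bool × Y₀ × Y₁,
      (w = (xor z.1 (f z.2.2), z.2)) ↔ (z = (xor w.1 (f w.2.2), w.2)) := by
    rintro ⟨wb, wy⟩ ⟨zb, zy⟩
    constructor <;> rintro h <;> rw [Prod.mk.injEq] at h ⊢ <;>
      obtain ⟨h1, h2⟩ := h <;> subst h2 <;> subst h1 <;>
      simp [Bool.xor_assoc]
  constructor
  · refine ⟨fun w z => if w = (xor z.1 (f z.2.2), z.2) then 1 else 0, ⟨?_, ?_⟩, ?_⟩
    · intro w z; dsimp only; split <;> norm_num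
    · intro w
      simp only [hg]
      simp
    · intro x z
      simp only [mul_ite, mul_one, mul_zero, Finset.sum_ite_eq', Finset.mem_univ, if_true]
      simp only [plusOp, hperm]
      rcases z with ⟨zb, zy₀, zy₁⟩
      rcases zb <;> rcases x <;> rcases hf : f zy₁ <;> simp [hf]
  · exact ⟨fun z => f z.2.2, fun x y => rfl⟩

end
end
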